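/- arXiv:1801.06616 — 2 statements merged into one kernel-verified Lean document; each statement's English description precedes it below -/
import Mathlib

section
/- Let k be an infinite field with char k ≠ 2, let a ∈ k be a non-square, and let b, c, d ∈ k with b ≠ 0 and (c,d) ≠ (0,0). Let K = k(s) be a field extension of k with s² = a, and let L = K(x,y) be a rational function field in two variables x, y over K (x, y algebraically independent over K). Let σ be a k-automorphism of L with σ(s) = −s, σ(x) = b/x, and σ(y) = (c(x + b/x) + d)/y. Set t₁ = (1/2)(x + b/x), t₂ = (1/(2s))(x − b/x), t₃ = (1/2)(y + (c(x + b/x) + d)/y), and t₄ = (1/(2s))(y − (c(x + b/x) + d)/y). Then the fixed field L^⟨σ⟩ = {u ∈ L : σ(u) = u} equals the subfield k(t₁, t₂, t₃, t₄) generated over k by t₁, t₂, t₃, t₄, and these elements satisfy the relations t₁² − a·t₂² = b and t₃² − a·t₄² = 2c·t₁ + d. -/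
universe u v w

/-- The fixed field of a single `k`-algebra automorphism. -/
def fixedSubfield {k : Type u} {L : Type w} [Field k] [Field L] [Algebra k L]
    (σ : L ≃ₐ[k] L) : IntermediateField k L where
  carrier := {u | σ u = u}
  mul_mem' := fun {p q} hp hq => by
    simp only [Set.mem_setOf_eq] at *; rw [map_mul, hp, hq]
  one_mem' := map_one σ
  add_mem' := fun {p q} hp hq => by
    simp only [Set.mem_setOf_eq] at *; rw [map_add, hp, hq]
  zero_mem' := map_zero σ
  algebraMap_mem' := fun r => σ.commutes r
  inv_mem' := fun u hu => by
    simp only [Set.mem_setOf_eq] at *; rw [map_inv₀, hu]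

/-- Quadratic extension `F + sF` as an intermediate field, given `s² ∈ k` and
non-vanishing of the norm form. -/
def quadExt {k : Type u} {L : Type w} [Field k] [Field L] [Algebra k L]
    (F : IntermediateField k L) (s : L) (a : k) (hs2 : s ^ 2 = algebraMap k L a)
    (hns : ∀ p ∈ F, ∀ q ∈ F, q ≠ 0 → p ^ 2 - algebraMap k L a * q ^ 2 ≠ 0) :
    IntermediateField k L where
  carrier := {u | ∃ p ∈ F, ∃ q ∈ F, u = p + s * q}
  mul_mem' := fun {u v} hu hv => by
    obtain ⟨p, hp, q, hq, rfl⟩ := hu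
    obtain ⟨p', hp', q', hq', rfl⟩ := hv
    exact ⟨p * p' + algebraMap k L a * (q * q'),
      F.add_mem (F.mul_mem hp hp') (F.mul_mem (F.algebraMap_mem a) (F.mul_mem hq hq')),
      p * q' + p' * q, F.add_mem (F.mul_mem hp hq') (F.mul_mem hp' hq),
      by linear_combination (q * q' : L) * hs2⟩
  one_mem' := ⟨1, F.one_mem, 0, F.zero_mem, by ring⟩
  add_mem' := fun {u v} hu hv => by
    obtain ⟨p, hp, q, hq, rfl⟩ := hu
    obtain ⟨p', hp', q', hq', rfl⟩ := hv
    exact ⟨p + p', F.add_mem hp hp', q + q', F.add_mem hq hq', by ring⟩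
  zero_mem' := ⟨0, F.zero_mem, 0, F.zero_mem, by ring⟩
  algebraMap_mem' := fun r => ⟨algebraMap k L r, F.algebraMap_mem r, 0, F.zero_mem, by ring⟩
  inv_mem' := by
    rintro u ⟨p, hp, q, hq, rfl⟩
    by_cases hq0 : q = 0
    · exact ⟨p⁻¹, F.inv_mem hp, 0, F.zero_mem, by rw [hq0]; simp⟩
    · have hD : p ^ 2 - algebraMap k L a * q ^ 2 ≠ 0 := hns p hp q hq hq0
      set D := p ^ 2 - algebraMap k L a * q ^ 2 with hDdef
      refine ⟨p / D, F.div_mem hp (F.sub_mem (pow_mem hp 2)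
        (F.mul_mem (F.algebraMap_mem a) (pow_mem hq 2))), -(q / D),
        F.neg_mem (F.div_mem hq (F.sub_mem (pow_mem hp 2)
        (F.mul_mem (F.algebraMap_mem a) (pow_mem hq 2)))), ?_⟩
      refine inv_eq_of_mul_eq_one_right ?_
      have hpq : p + s * q ≠ 0 := by
        intro h0
        apply hD
        have : p = -(s * q) := by linear_combination h0
        rw [hDdef, this]; linear_combination (q^2 : L) * hs2
      have h1 : (p + s * q) * (p / D + s * -(q / D)) = (p ^ 2 - s ^ 2 * q ^ 2) / D := by
        field_simp
        ring
      rw [h1, hs2, ← hDdef, div_self hD]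

/-- **Lemma 1.1 (first half).** Let `k` be an infinite field of characteristic `≠ 2`, `a ∈ k` a
non-square, `b, c, d ∈ k` with `b ≠ 0` and `(c,d) ≠ (0,0)`.  Let `K = k(s)` with `s² = a`, and let
`L = K(x,y)` be a rational function field in two variables over `K`.  Let `σ` be the
`k`-automorphism of `L` with `σ(s) = -s`, `σ(x) = b/x`, `σ(y) = (c(x + b/x) + d)/y`.  With
`t₁ = (x + b/x)/2`, `t₂ = (x - b/x)/(2s)`, `t₃ = (y + (c(x+b/x)+d)/y)/2`,
`t₄ = (y - (c(x+b/x)+d)/y)/(2s)`, the fixed field `L^⟨σ⟩ = {u ∈ L : σ u = u}` equals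
`k(t₁,t₂,t₃,t₄)`, and `t₁² - a t₂² = b`, `t₃² - a t₄² = 2c t₁ + d`. -/
theorem stmt0 (k : Type u) [Field k] [Infinite k] (hchar : (2 : k) ≠ 0)
    (a b c d : k) (ha : ∀ z : k, z ^ 2 ≠ a) (hb : b ≠ 0) (hcd : ¬(c = 0 ∧ d = 0))
    (K : Type v) [Field K] [Algebra k K] (s : K)
    (hs : s ^ 2 = algebraMap k K a)
    (hKgen : IntermediateField.adjoin k {s} = (⊤ : IntermediateField k K))
    (L : Type w) [Field L] [Algebra K L] [Algebra k L] [IsScalarTower k K L]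
    (x y : L) (hxy : AlgebraicIndependent K ![x, y])
    (hLgen : IntermediateField.adjoin K {x, y} = (⊤ : IntermediateField K L))
    (σ : L ≃ₐ[k] L)
    (hσs : σ (algebraMap K L s) = - algebraMap K L s)
    (hσx : σ x = algebraMap k L b / x)
    (hσy : σ y = (algebraMap k L c * (x + algebraMap k L b / x) + algebraMap k L d) / y)
    (t₁ t₂ t₃ t₄ : L)
    (ht₁ : t₁ = (x + algebraMap k L b / x) / 2)
    (ht₂ : t₂ = (x - algebraMap k L b / x) / (2 * algebraMap K L s))
    (ht₃ : t₃ = (y + (algebraMap k L c * (x + algebraMap k L b / x) + algebraMap k L d) / y) / 2)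
    (ht₄ : t₄ = (y - (algebraMap k L c * (x + algebraMap k L b / x) + algebraMap k L d) / y)
        / (2 * algebraMap K L s)) :
    {u : L | σ u = u} = (IntermediateField.adjoin k {t₁, t₂, t₃, t₄} : IntermediateField k L) ∧
    t₁ ^ 2 - algebraMap k L a * t₂ ^ 2 = algebraMap k L b ∧
    t₃ ^ 2 - algebraMap k L a * t₄ ^ 2 = 2 * algebraMap k L c * t₁ + algebraMap k L d := by
  have hinj : Function.Injective (algebraMap k L) := (algebraMap k L).injective
  have hinjK : Function.Injective (algebraMap K L) := (algebraMap K L).injective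
  have h2L : (2 : L) ≠ 0 := by
    intro h
    apply hchar
    apply hinj
    rw [map_ofNat, map_zero, h]
  have ha0 : a ≠ 0 := fun h => ha 0 (by simp [h])
  have hsK : s ≠ 0 := by
    intro h
    apply ha0
    apply (algebraMap k K).injective
    rw [map_zero, ← hs, h, zero_pow two_ne_zero]
  have hsL : algebraMap K L s ≠ 0 := fun h => hsK (hinjK (by rw [map_zero, h]))
  have hs2L : (algebraMap K L s) ^ 2 = algebraMap k L a := by
    rw [← map_pow, hs, ← IsScalarTower.algebraMap_apply]
  have htrx : Transcendental K x := by
    have := hxy.transcendental 0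
    simpa using this
  have hx0 : x ≠ 0 := fun h => htrx (h ▸ isAlgebraic_zero)
  have htry : Transcendental K y := by
    have := hxy.transcendental 1
    simpa using this
  have hy0 : y ≠ 0 := fun h => htry (h ▸ isAlgebraic_zero)
  have hbL : algebraMap k L b ≠ 0 := fun h => hb (hinj (by rw [map_zero, h]))
  have htrxk : Transcendental k x := htrx.of_tower_top (K := k)
  -- the numerator `N` is nonzero
  have hN0 : algebraMap k L c * (x + algebraMap k L b / x) + algebraMap k L d ≠ 0 := by
    intro h
    have hpoly : algebraMap k L c * x ^ 2 + algebraMap k L d * x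
        + algebraMap k L (c * b) = 0 := by
      have h2 : (algebraMap k L c * (x + algebraMap k L b / x) + algebraMap k L d) * x = 0 := by
        rw [h, zero_mul]
      rw [map_mul]
      field_simp at h2
      linear_combination h2
    apply htrxk
    refine ⟨Polynomial.C c * Polynomial.X ^ 2 + Polynomial.C d * Polynomial.X
      + Polynomial.C (c * b), ?_, ?_⟩
    · intro h0
      apply hcd
      constructor
      · have := congrArg (fun p => Polynomial.coeff p 2) h0
        simpa using this
      · have := congrArg (fun p => Polynomial.coeff p 1) h0
        simpa using this
    · simpa using hpoly
  have hσb : σ (algebraMap k L b) = algebraMap k L b := σ.commutes b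
  have hσc : σ (algebraMap k L c) = algebraMap k L c := σ.commutes c
  have hσd : σ (algebraMap k L d) = algebraMap k L d := σ.commutes d
  have hbb : algebraMap k L b / (algebraMap k L b / x) = x := by
    rw [div_div_eq_mul_div, mul_comm, mul_div_assoc, div_self hbL, mul_one]
  have hσx0 : σ x ≠ 0 := by rw [hσx]; exact div_ne_zero hbL hx0
  have hσt₁ : σ t₁ = t₁ := by
    rw [ht₁, map_div₀, map_add, map_div₀, hσx, hσb, map_ofNat, hbb, add_comm]
  have hσt₂ : σ t₂ = t₂ := by
    rw [ht₂, map_div₀, map_sub, map_div₀, hσx, hσb, map_mul, map_ofNat, hσs, hbb]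
    rw [mul_neg, div_neg, neg_div', neg_sub]
  have hσN : σ (algebraMap k L c * (x + algebraMap k L b / x) + algebraMap k L d)
      = algebraMap k L c * (x + algebraMap k L b / x) + algebraMap k L d := by
    rw [map_add, map_mul, map_add, map_div₀, hσx, hσb, hσc, hσd, hbb, add_comm x]
  have hNdiv : (algebraMap k L c * (x + algebraMap k L b / x) + algebraMap k L d)
      / ((algebraMap k L c * (x + algebraMap k L b / x) + algebraMap k L d) / y) = y := by
    rw [div_div_eq_mul_div, mul_comm, mul_div_assoc, div_self hN0, mul_one]
  have hσt₃ : σ t₃ = t₃ := by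
    rw [ht₃, map_div₀, map_add, map_div₀, hσy, hσN, map_ofNat, hNdiv, add_comm]
  have hσt₄ : σ t₄ = t₄ := by
    rw [ht₄, map_div₀, map_sub, map_div₀, hσy, hσN, map_mul, map_ofNat, hσs, hNdiv]
    rw [mul_neg, div_neg, neg_div', neg_sub]
  -- the two algebraic relations
  have hrel1 : t₁ ^ 2 - algebraMap k L a * t₂ ^ 2 = algebraMap k L b := by
    rw [ht₁, ht₂, ← hs2L]
    field_simp
    ring
  have hrel2 : t₃ ^ 2 - algebraMap k L a * t₄ ^ 2
      = 2 * algebraMap k L c * t₁ + algebraMap k L d := by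
    rw [ht₁, ht₃, ht₄, ← hs2L]
    field_simp
    ring
  refine ⟨?_, hrel1, hrel2⟩
  -- abbreviation
  set F : IntermediateField k L := IntermediateField.adjoin k {t₁, t₂, t₃, t₄} with hFdef
  have hFfix : ∀ v ∈ F, σ v = v := by
    have hle : F ≤ fixedSubfield σ := by
      rw [hFdef, IntermediateField.adjoin_le_iff]
      rintro v hv
      simp only [Set.mem_insert_iff, Set.mem_singleton_iff] at hv
      rcases hv with rfl | rfl | rfl | rfl
      · exact hσt₁
      · exact hσt₂
      · exact hσt₃
      · exact hσt₄
    exact fun v hv => hle hv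
  have h2s : (2 : L) * algebraMap K L s ≠ 0 := mul_ne_zero h2L hsL
  -- the norm form is anisotropic over F
  have hns : ∀ p ∈ F, ∀ q ∈ F, q ≠ 0 →
      p ^ 2 - algebraMap k L a * q ^ 2 ≠ 0 := by
    intro p hp q hq hq0 hD
    have hfac : (p - algebraMap K L s * q) * (p + algebraMap K L s * q) = 0 := by
      linear_combination hD - (q ^ 2 : L) * hs2L
    have key : (2 : L) * (algebraMap K L s * q) = 0 := by
      rcases mul_eq_zero.mp hfac with h | h
      · have h1 : p = algebraMap K L s * q := by linear_combination h
        have hthis := hFfix p hp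
        rw [h1, map_mul, hσs, hFfix q hq] at hthis
        linear_combination -hthis
      · have h1 : p = -(algebraMap K L s * q) := by linear_combination h
        have hthis := hFfix p hp
        rw [h1, map_neg, map_mul, hσs, hFfix q hq] at hthis
        linear_combination hthis
    have : algebraMap K L s * q = 0 := by
      rcases mul_eq_zero.mp key with h | h
      · exact absurd h h2L
      · exact h
    rcases mul_eq_zero.mp this with h | h
    · exact hsL h
    · exact hq0 h
  set T : IntermediateField k L := quadExt F (algebraMap K L s) a hs2L hns with hTdef
  have hsT : algebraMap K L s ∈ T := ⟨0, F.zero_mem, 1, F.one_mem, by ring⟩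
  have ht₁F : t₁ ∈ F := IntermediateField.subset_adjoin k _ (by simp)
  have ht₂F : t₂ ∈ F := IntermediateField.subset_adjoin k _ (by simp)
  have ht₃F : t₃ ∈ F := IntermediateField.subset_adjoin k _ (by simp)
  have ht₄F : t₄ ∈ F := IntermediateField.subset_adjoin k _ (by simp)
  have hxdec : x = t₁ + algebraMap K L s * t₂ := by
    rw [ht₁, ht₂]
    field_simp
    ring
  have hydec : y = t₃ + algebraMap K L s * t₄ := by
    rw [ht₃, ht₄]
    field_simp
    ring
  have hKmem : ∀ r : K, algebraMap K L r ∈ T := by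
    intro r
    have hr : r ∈ IntermediateField.adjoin k {s} := by rw [hKgen]; trivial
    have hmem : algebraMap K L r ∈
        (IntermediateField.adjoin k {s}).map (IsScalarTower.toAlgHom k K L) :=
      ⟨r, hr, rfl⟩
    rw [IntermediateField.adjoin_map] at hmem
    have himg : (IsScalarTower.toAlgHom k K L) '' {s} = {algebraMap K L s} := by
      simp
    rw [himg] at hmem
    exact (IntermediateField.adjoin_le_iff.mpr (by simpa using hsT)) hmem
  let T' : IntermediateField K L :=
    { carrier := (T : Set L)
      mul_mem' := fun hu hv => T.mul_mem hu hv
      one_mem' := T.one_mem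
      add_mem' := fun hu hv => T.add_mem hu hv
      zero_mem' := T.zero_mem
      algebraMap_mem' := hKmem
      inv_mem' := fun u hu => T.inv_mem hu }
  have hall : ∀ u : L, ∃ p ∈ F, ∃ q ∈ F, u = p + algebraMap K L s * q := by
    intro u
    have htop : u ∈ (⊤ : IntermediateField K L) := trivial
    rw [← hLgen] at htop
    have hle : IntermediateField.adjoin K {x, y} ≤ T' := by
      rw [IntermediateField.adjoin_le_iff]
      rintro v hv
      simp only [Set.mem_insert_iff, Set.mem_singleton_iff] at hv
      rcases hv with rfl | rfl
      · exact ⟨t₁, ht₁F, t₂, ht₂F, hxdec⟩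
      · exact ⟨t₃, ht₃F, t₄, ht₄F, hydec⟩
    exact hle htop
  ext u
  simp only [Set.mem_setOf_eq, SetLike.mem_coe]
  constructor
  · intro hu
    obtain ⟨p, hp, q, hq, hupq⟩ := hall u
    have h1 : σ u = p - algebraMap K L s * q := by
      rw [hupq, map_add, map_mul, hFfix p hp, hFfix q hq, hσs]
      ring
    have h3 : p - algebraMap K L s * q = p + algebraMap K L s * q := by
      rw [← h1, hu, hupq]
    have h4 : (2 : L) * (algebraMap K L s * q) = 0 := by linear_combination -h3
    have h5 : algebraMap K L s * q = 0 := by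
      rcases mul_eq_zero.mp h4 with h | h
      · exact absurd h h2L
      · exact h
    have hqz : q = 0 := by
      rcases mul_eq_zero.mp h5 with h | h
      · exact absurd h hsL
      · exact h
    rw [hupq, hqz, mul_zero, add_zero]
    exact hp
  · intro hu
    exact hFfix u hu
end

section
/- Let L₀ be a field extension of ℚ of transcendence degree 2 over ℚ, generated over ℚ by elements t₁, t₂, t₃, t₄ satisfying t₁² − 3·t₂² = 4 and t₃² − 3·t₄² = 14·t₁ + 28. Then L₀ is not ℚ-rational (and hence not ℚ-unirational), even though the defining system of equations has the rational solution (t₁, t₂, t₃, t₄) = (−2, 0, 0, 0). -/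
universe v

/-- `L` is `k`-rational: `k`-isomorphic to a rational function field over `k`. -/
def IsRationalExt (k : Type) (L : Type v) [Field k] [Field L] [Algebra k L] : Prop :=
  ∃ n : ℕ, Nonempty (L ≃ₐ[k] FractionRing (MvPolynomial (Fin n) k))

/-- `L` is `k`-unirational: `k`-embeds into a rational function field over `k`. -/
def IsUnirationalExt (k : Type) (L : Type v) [Field k] [Field L] [Algebra k L] : Prop :=
  ∃ n : ℕ, Nonempty (L →ₐ[k] FractionRing (MvPolynomial (Fin n) k))

/-!
Were `L₀` embedded in `ℚ(x₁, …, xₙ)`, specialising finitely many of its elements at a rational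
point where all their denominators are nonzero (one exists because `ℚ` is infinite) would carry
every polynomial identity and every non-vanishing among them down to `ℚ`. So it suffices to study
rational solutions. As `3` is not a square mod `7`, the form `x² - 3y²` is anisotropic over `ℚ₇`,
and `‖x² - 3y²‖₇ = max (‖x‖₇, ‖y‖₇)²` is an even power of `7`. For a solution with `t₁ ≠ -2`, the
second equation makes `v₇(t₁ + 2)` odd, hence positive, so `t₁ - 2` is a `7`-adic unit and the
first equation, `(t₁ - 2)(t₁ + 2) = 3t₂²`, makes it even. Hence `t₁ = -2` in `L₀`, then `t₂ = 0`
and `t₃² = 3t₄²`, which by anisotropy again forces `t₃ = t₄ = 0`; but then `L₀ = ℚ`, contradicting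
transcendence degree `2`.
-/

open MvPolynomial

theorem eq_zero_and_eq_zero_of_sq_eq_mul_sq {F : Type*} [Field F] {c : F} (hc : ¬ IsSquare c)
    {u v : F} (h : u ^ 2 = c * v ^ 2) : u = 0 ∧ v = 0 := by
  have hv : v = 0 := by
    by_contra hv
    exact hc ⟨u / v, by rw [div_mul_div_comm, ← sq, h]; field_simp⟩
  subst hv
  simpa using h

theorem PadicInt.toZMod_eq_zero_iff {p : ℕ} [Fact p.Prime] (z : ℤ_[p]) :
    PadicInt.toZMod z = 0 ↔ ‖z‖ < 1 := by
  rw [← RingHom.mem_ker, PadicInt.ker_toZMod, IsLocalRing.mem_maximalIdeal, PadicInt.mem_nonunits]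

instance fact_prime_seven : Fact (Nat.Prime 7) := ⟨by norm_num⟩

namespace Padic

section

variable {p : ℕ} [Fact p.Prime]

theorem norm_sq_sub_mul_sq_of_max_eq_one {c : ℤ} (hc : ¬ IsSquare (c : ZMod p)) {a b : ℚ_[p]}
    (hab : max ‖a‖ ‖b‖ = 1) : ‖a ^ 2 - c * b ^ 2‖ = 1 := by
  let A : ℤ_[p] := ⟨a, hab ▸ le_max_left _ _⟩
  let B : ℤ_[p] := ⟨b, hab ▸ le_max_right _ _⟩
  have hAB : ((A ^ 2 - c * B ^ 2 : ℤ_[p]) : ℚ_[p]) = a ^ 2 - c * b ^ 2 := by push_cast; rfl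
  replace hab : max ‖A‖ ‖B‖ = 1 := hab
  rw [← hAB, PadicInt.padic_norm_e_of_padicInt]
  refine (PadicInt.norm_le_one _).antisymm (not_lt.mp fun hlt => ?_)
  rw [← PadicInt.toZMod_eq_zero_iff, map_sub, map_mul, map_pow, map_pow, map_intCast,
    sub_eq_zero] at hlt
  obtain ⟨ha, hb⟩ := eq_zero_and_eq_zero_of_sq_eq_mul_sq hc hlt
  rw [PadicInt.toZMod_eq_zero_iff] at ha hb
  rcases max_choice ‖A‖ ‖B‖ with h | h <;> rw [h] at hab <;> linarith

theorem norm_sq_sub_mul_sq {c : ℤ} (hc : ¬ IsSquare (c : ZMod p)) (x y : ℚ_[p]) :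
    ‖x ^ 2 - c * y ^ 2‖ = max ‖x‖ ‖y‖ ^ 2 := by
  obtain ⟨w, hw⟩ : ∃ w : ℚ_[p], ‖w‖ = max ‖x‖ ‖y‖ :=
    (max_choice ‖x‖ ‖y‖).elim (fun h => ⟨x, h.symm⟩) (fun h => ⟨y, h.symm⟩)
  rcases eq_or_ne w 0 with rfl | hw0
  · have hx : x = 0 := norm_le_zero_iff.mp ((le_max_left ‖x‖ ‖y‖).trans_eq (by simp [← hw]))
    have hy : y = 0 := norm_le_zero_iff.mp ((le_max_right ‖x‖ ‖y‖).trans_eq (by simp [← hw]))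
    simp [hx, hy]
  have hnorm : max ‖x / w‖ ‖y / w‖ = 1 := by
    rw [norm_div, norm_div, max_div_div_right (norm_nonneg w), ← hw, div_self]
    exact norm_ne_zero_iff.mpr hw0
  calc ‖x ^ 2 - c * y ^ 2‖ = ‖w ^ 2 * ((x / w) ^ 2 - c * (y / w) ^ 2)‖ := by
        congr 1; field_simp
    _ = max ‖x‖ ‖y‖ ^ 2 := by
        rw [norm_mul, norm_sq_sub_mul_sq_of_max_eq_one hc hnorm, norm_pow, hw, mul_one]

theorem norm_sq_ne_inv_prime (u : ℚ_[p]) : ‖u‖ ^ 2 ≠ (p : ℝ)⁻¹ := by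
  rcases eq_or_ne u 0 with rfl | hu
  · simpa using (Nat.cast_ne_zero.mpr (Fact.out : p.Prime).ne_zero : (p : ℝ) ≠ 0).symm
  intro h
  have hp : (1 : ℝ) < p := by exact_mod_cast (Fact.out : p.Prime).one_lt
  rw [norm_eq_zpow_neg_valuation hu, ← zpow_natCast, ← zpow_mul, ← zpow_neg_one] at h
  have := zpow_right_injective₀ (by positivity) hp.ne' h
  omega

end

theorem norm_sq_sub_three_mul_sq (x y : ℚ_[7]) : ‖x ^ 2 - 3 * y ^ 2‖ = max ‖x‖ ‖y‖ ^ 2 := by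
  exact_mod_cast norm_sq_sub_mul_sq (c := 3) (by decide) x y

theorem eq_zero_of_sq_sub_three_mul_sq_eq_zero {x y : ℚ_[7]} (h : x ^ 2 - 3 * y ^ 2 = 0) :
    y = 0 := by
  have := norm_sq_sub_three_mul_sq x y
  rw [h, norm_zero, eq_comm, sq_eq_zero_iff] at this
  exact norm_le_zero_iff.mp (this ▸ le_max_right _ _)

theorem eq_neg_two_of_sq_sub_three_sq {P Q R S : ℚ_[7]} (h₁ : P ^ 2 - 3 * Q ^ 2 = 4)
    (h₂ : R ^ 2 - 3 * S ^ 2 = 14 * P + 28) : P = -2 := by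
  by_contra hP
  have hP2 : P + 2 ≠ 0 := fun h => hP (eq_neg_of_add_eq_zero_left h)
  have h2 : ‖(2 : ℚ_[7])‖ = 1 := by exact_mod_cast norm_natCast_eq_one_iff.mpr (by norm_num)
  have h3 : ‖(3 : ℚ_[7])‖ = 1 := by exact_mod_cast norm_natCast_eq_one_iff.mpr (by norm_num)
  have h4 : ‖(4 : ℚ_[7])‖ = 1 := by exact_mod_cast norm_natCast_eq_one_iff.mpr (by norm_num)
  have h14 : ‖(14 : ℚ_[7])‖ = 7⁻¹ := by
    rw [show (14 : ℚ_[7]) = 2 * (7 : ℕ) by norm_num, norm_mul, h2, norm_p, one_mul]; norm_num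
  have hPQ : max ‖P‖ ‖Q‖ = 1 := by
    have := norm_sq_sub_three_mul_sq P Q
    rw [h₁, h4] at this
    nlinarith [norm_nonneg P, le_max_left ‖P‖ ‖Q‖]
  have hP2le : ‖P + 2‖ ≤ 1 :=
    (nonarchimedean P 2).trans (max_le (hPQ ▸ le_max_left _ _) h2.le)
  obtain ⟨w, hw⟩ : ∃ w : ℚ_[7], ‖w‖ = max ‖R‖ ‖S‖ :=
    (max_choice ‖R‖ ‖S‖).elim (fun h => ⟨R, h.symm⟩) (fun h => ⟨S, h.symm⟩)
  have hRS : ‖w‖ ^ 2 = 7⁻¹ * ‖P + 2‖ := by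
    rw [hw, ← norm_sq_sub_three_mul_sq, h₂, show 14 * P + 28 = 14 * (P + 2) by ring, norm_mul,
      h14]
  have hP2lt : ‖P + 2‖ < 1 := hP2le.lt_of_ne fun h =>
    norm_sq_ne_inv_prime w (by rw [hRS, h, mul_one]; norm_num)
  have hPm2 : ‖P - 2‖ = 1 := by
    have hne : ‖P + 2‖ ≠ ‖(-4 : ℚ_[7])‖ := by rw [norm_neg, h4]; exact hP2lt.ne
    rw [show P - 2 = P + 2 + -4 by ring, add_eq_max_of_ne hne, norm_neg, h4,
      max_eq_right hP2lt.le]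
  have hQ : ‖Q‖ ^ 2 = ‖P + 2‖ := by
    have := congrArg norm (show 3 * Q ^ 2 = (P - 2) * (P + 2) by linear_combination -h₁)
    rwa [norm_mul, norm_mul, h3, hPm2, norm_pow, one_mul, one_mul] at this
  have hQ0 : ‖Q‖ ≠ 0 := fun h => hP2 (norm_eq_zero.mp (by rw [← hQ, h]; ring))
  refine norm_sq_ne_inv_prime (w / Q) ?_
  rw [norm_div, div_pow, hRS, hQ]
  field_simp
  norm_num

end Padic

theorem Rat.eq_zero_of_sq_sub_three_mul_sq_eq_zero {r s : ℚ} (h : r ^ 2 - 3 * s ^ 2 = 0) :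
    s = 0 := by
  have h' : (r : ℚ_[7]) ^ 2 - 3 * (s : ℚ_[7]) ^ 2 = 0 := by exact_mod_cast h
  exact_mod_cast Padic.eq_zero_of_sq_sub_three_mul_sq_eq_zero h'

theorem Rat.eq_neg_two_of_sq_sub_three_sq {p q r s : ℚ} (h₁ : p ^ 2 - 3 * q ^ 2 = 4)
    (h₂ : r ^ 2 - 3 * s ^ 2 = 14 * p + 28) : p = -2 := by
  have h₁' : (p : ℚ_[7]) ^ 2 - 3 * (q : ℚ_[7]) ^ 2 = 4 := by exact_mod_cast h₁
  have h₂' : (r : ℚ_[7]) ^ 2 - 3 * (s : ℚ_[7]) ^ 2 = 14 * p + 28 := by exact_mod_cast h₂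
  exact_mod_cast Padic.eq_neg_two_of_sq_sub_three_sq h₁' h₂'

namespace MvPolynomial

variable {k σ : Type*} [Field k] [Infinite k]

theorem nonempty_adjoin_algHom_fractionRing (s : Finset (FractionRing (MvPolynomial σ k))) :
    Nonempty (Algebra.adjoin k (s : Set (FractionRing (MvPolynomial σ k))) →ₐ[k] k) := by
  choose num den hden hfrac using
    IsFractionRing.div_surjective (A := MvPolynomial σ k) (K := FractionRing (MvPolynomial σ k))
  obtain ⟨v, hv⟩ : ∃ v : σ → k, eval v (∏ z ∈ s, den z) ≠ 0 := by
    by_contra! h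
    exact Finset.prod_ne_zero_iff.mpr (fun z _ => nonZeroDivisors.ne_zero (hden z))
      (MvPolynomial.funext fun v => by simpa using h v)
  -- `A` is the local ring of the point `v`; evaluation at `v` extends to it.
  let S : Submonoid (MvPolynomial σ k) := (nonZeroDivisors k).comap (eval v)
  have hS : S ≤ nonZeroDivisors (MvPolynomial σ k) := fun b hb =>
    mem_nonZeroDivisors_of_ne_zero fun h0 =>
      nonZeroDivisors.ne_zero (h0 ▸ hb : eval v 0 ∈ _) (map_zero _)
  let A := Localization.subalgebra.ofField (FractionRing (MvPolynomial σ k)) S hS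
  let ψ : A →+* k := IsLocalization.lift (M := S) (g := eval v) fun b =>
    (nonZeroDivisors.ne_zero b.2).isUnit
  have hψ : ∀ c : k, ψ (algebraMap k A c) = c := fun c => by
    rw [IsScalarTower.algebraMap_apply k (MvPolynomial σ k) A, IsLocalization.lift_eq]
    simp
  have hsA : (s : Set (FractionRing (MvPolynomial σ k))) ⊆ A.restrictScalars k := fun z hz => by
    refine ⟨num z, den z, ?_, ?_⟩
    · rw [map_prod, Finset.prod_ne_zero_iff] at hv
      exact mem_nonZeroDivisors_of_ne_zero (hv z hz)
    · rw [← div_eq_mul_inv, hfrac]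
  exact ⟨({ ψ with commutes' := hψ } : A.restrictScalars k →ₐ[k] k).comp
    (Subalgebra.inclusion (Algebra.adjoin_le hsA))⟩

end MvPolynomial

theorem IsRationalExt.isUnirationalExt {k : Type} {L : Type v} [Field k] [Field L] [Algebra k L]
    (h : IsRationalExt k L) : IsUnirationalExt k L :=
  let ⟨n, ⟨e⟩⟩ := h; ⟨n, ⟨e.toAlgHom⟩⟩

namespace IsUnirationalExt

section

variable {k : Type} {L : Type v} [Field k] [Infinite k] [Field L] [Algebra k L]

theorem nonempty_adjoin_algHom (hL : IsUnirationalExt k L) (s : Finset L) :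
    Nonempty (Algebra.adjoin k (s : Set L) →ₐ[k] k) := by
  classical
  obtain ⟨n, ⟨φ⟩⟩ := hL
  obtain ⟨ψ⟩ := MvPolynomial.nonempty_adjoin_algHom_fractionRing (s.image φ)
  have hmap : (Algebra.adjoin k (s : Set L)).map φ = Algebra.adjoin k (s.image φ : Set _) := by
    rw [AlgHom.map_adjoin, Finset.coe_image]
  exact ⟨ψ.comp ((φ.comp (Algebra.adjoin k (s : Set L)).val).codRestrict _ fun y =>
    hmap ▸ Subalgebra.mem_map.mpr ⟨y, y.2, rfl⟩)⟩

theorem exists_eval_eq_zero_and_ne_zero (hL : IsUnirationalExt k L) {ι : Type*} [Fintype ι]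
    (eqs : Set (MvPolynomial ι k)) (g : MvPolynomial ι k) (x : ι → L)
    (hx : ∀ f ∈ eqs, aeval x f = 0) (hg : aeval x g ≠ 0) :
    ∃ c : ι → k, (∀ f ∈ eqs, eval c f = 0) ∧ eval c g ≠ 0 := by
  classical
  let s : Finset L := insert (aeval x g)⁻¹ (Finset.univ.image x)
  obtain ⟨ψ⟩ := hL.nonempty_adjoin_algHom s
  let x' : ι → Algebra.adjoin k (s : Set L) := fun i => ⟨x i, Algebra.subset_adjoin (by simp [s])⟩
  let ginv : Algebra.adjoin k (s : Set L) := ⟨(aeval x g)⁻¹, Algebra.subset_adjoin (by simp [s])⟩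
  have hx' : ∀ f, ((aeval x' f : Algebra.adjoin k (s : Set L)) : L) = aeval x f := fun f =>
    MvPolynomial.comp_aeval_apply x' (Subalgebra.val _) f
  have hψ : ∀ f, eval (fun i => ψ (x' i)) f = ψ (aeval x' f) := fun f =>
    (MvPolynomial.comp_aeval_apply x' ψ f).symm
  refine ⟨fun i => ψ (x' i), fun f hf => ?_, fun h => ?_⟩
  · rw [hψ, show aeval x' f = 0 from Subtype.ext (by rw [hx', hx f hf]; rfl), map_zero]
  · have hinv : aeval x' g * ginv = 1 := Subtype.ext (by simp [hx', ginv, hg])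
    simpa [← hψ, h] using congrArg ψ hinv

end

variable {L : Type v} [Field L] [Algebra ℚ L]

theorem eq_neg_two_of_sq_sub_three_sq (hL : IsUnirationalExt ℚ L) {a b c d : L}
    (h₁ : a ^ 2 - 3 * b ^ 2 = 4) (h₂ : c ^ 2 - 3 * d ^ 2 = 14 * a + 28) : a = -2 := by
  by_contra hne
  obtain ⟨r, hr, hr₀⟩ := hL.exists_eval_eq_zero_and_ne_zero
    {X 0 ^ 2 - 3 * X 1 ^ 2 - 4, X 2 ^ 2 - 3 * X 3 ^ 2 - (14 * X 0 + 28)} (X 0 + 2)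
    ![a, b, c, d] (by simp [h₁, h₂]) (by simpa [add_eq_zero_iff_eq_neg] using hne)
  simp only [Set.mem_insert_iff, Set.mem_singleton_iff, forall_eq_or_imp, forall_eq, map_sub,
    map_add, map_mul, map_pow, eval_X, eval_ofNat, sub_eq_zero, ne_eq, add_eq_zero_iff_eq_neg]
    at hr hr₀
  exact hr₀ (Rat.eq_neg_two_of_sq_sub_three_sq hr.1 hr.2)

theorem eq_zero_of_sq_sub_three_mul_sq_eq_zero (hL : IsUnirationalExt ℚ L) {a b : L}
    (h : a ^ 2 - 3 * b ^ 2 = 0) : b = 0 := by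
  by_contra hne
  obtain ⟨r, hr, hr₀⟩ := hL.exists_eval_eq_zero_and_ne_zero {X 0 ^ 2 - 3 * X 1 ^ 2} (X 1)
    ![a, b] (by simpa using h) (by simpa using hne)
  simp only [Set.mem_singleton_iff, forall_eq, map_sub, map_mul, map_pow, eval_X, eval_ofNat]
    at hr hr₀
  exact hr₀ (Rat.eq_zero_of_sq_sub_three_mul_sq_eq_zero hr)

end IsUnirationalExt

theorem IsTranscendenceBasis.bot_ne_top {F E ι : Type*} [Field F] [Field E] [Algebra F E]
    [Nonempty ι] {x : ι → E} (hx : IsTranscendenceBasis F x) :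
    (⊥ : IntermediateField F E) ≠ ⊤ := by
  intro h
  obtain ⟨y, hy⟩ := hx.nonempty_iff_transcendental.mp ‹_›
  obtain ⟨c, rfl⟩ : y ∈ Set.range (algebraMap F E) := by
    rw [← IntermediateField.mem_bot, h]
    exact IntermediateField.mem_top
  exact hy (isAlgebraic_algebraMap c)

/-- **Example 2.1.**  Let `L₀` be a field extension of `ℚ` of transcendence degree `2`
generated by `t₁, t₂, t₃, t₄` with `t₁² - 3 t₂² = 4` and `t₃² - 3 t₄² = 14 t₁ + 28`.  Then `L₀`
is neither `ℚ`-rational nor `ℚ`-unirational, even though the defining system of equations has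
the rational solution `(t₁, t₂, t₃, t₄) = (-2, 0, 0, 0)`. -/
theorem stmt14 (L₀ : Type v) [Field L₀] [Algebra ℚ L₀]
    (htrdeg : ∃ tb : Fin 2 → L₀, IsTranscendenceBasis ℚ tb)
    (t₁ t₂ t₃ t₄ : L₀)
    (hgen : IntermediateField.adjoin ℚ {t₁, t₂, t₃, t₄} = (⊤ : IntermediateField ℚ L₀))
    (h1 : t₁ ^ 2 - 3 * t₂ ^ 2 = 4)
    (h2 : t₃ ^ 2 - 3 * t₄ ^ 2 = 14 * t₁ + 28) :
    (¬ IsRationalExt ℚ L₀ ∧ ¬ IsUnirationalExt ℚ L₀) ∧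
    ((-2 : ℚ) ^ 2 - 3 * (0 : ℚ) ^ 2 = 4 ∧
      (0 : ℚ) ^ 2 - 3 * (0 : ℚ) ^ 2 = 14 * (-2 : ℚ) + 28) := by
  refine ⟨?_, by norm_num⟩
  suffices hU : ¬ IsUnirationalExt ℚ L₀ from ⟨fun hR => hU hR.isUnirationalExt, hU⟩
  intro hL
  have := Algebra.charZero_of_charZero ℚ L₀
  have ht₁ : t₁ = -2 := hL.eq_neg_two_of_sq_sub_three_sq h1 h2
  have ht₂ : t₂ = 0 := by
    have h3 : 3 * t₂ ^ 2 = 0 := by linear_combination -h1 + (t₁ - 2) * ht₁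
    simpa using h3
  have ht₄ : t₄ = 0 :=
    hL.eq_zero_of_sq_sub_three_mul_sq_eq_zero (a := t₃) (by linear_combination h2 + 14 * ht₁)
  have ht₃ : t₃ = 0 := by
    have h3 : t₃ ^ 2 = 0 := by linear_combination h2 + 3 * t₄ * ht₄ + 14 * ht₁
    simpa using h3
  obtain ⟨tb, htb⟩ := htrdeg
  refine htb.bot_ne_top (hgen ▸ (IntermediateField.adjoin_eq_bot_iff.mpr ?_)).symm
  simp [Set.insert_subset_iff, ht₁, ht₂, ht₃, ht₄]
end
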